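/- Let H be a hyperplane with unit normal ν, and let ω ⊂ H_- be a bounded measurable set such that for every z ∈ H, the closure of ∂*ω meets the open ray {z + tν : t < 0} in at most one point. Then ω is essentially open, i.e., ω is Lebesgue-equivalent to an open set. -/

import Mathlib

/-
Let `N` be the closure of the essential boundary `∂*ω`. Off `N`, the set `ω` is locally null or
locally conull: if a ball met both `ω` and its complement in positive measure, the Lebesgue density
theorem and the intermediate value theorem would give a smaller ball inside it that `ω` cuts into
two halves of equal measure; iterating, such nested balls shrink to a point at which both `ω` and
`ωᶜ` have positive upper density, that is, to a point of `∂*ω`. Hence `ω` coincides a.e. with the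
open set of points near which `ω` is conull, as soon as `N` is null. And `N` is null: it lies in
the closed halfspace, and its part below `H` as well as its part on `H` meets every line parallel
to `ν` at most once, so the translates of each part along `ν` are pairwise disjoint sets of equal
measure.
-/

open MeasureTheory Metric Filter Set
open scoped RealInnerProductSpace Topology ENNReal symmDiff

/-- The set of points at which the measurable set `ω` has `d`-dimensional density `t`. -/
noncomputable def densityPts {d : ℕ} (ω : Set (EuclideanSpace ℝ (Fin d))) (t : ℝ≥0∞) :
    Set (EuclideanSpace ℝ (Fin d)) :=
  {x | Filter.Tendsto (fun ρ : ℝ => volume (ω ∩ Metric.ball x ρ) / volume (Metric.ball x ρ))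
    (nhdsWithin 0 (Set.Ioi 0)) (nhds t)}

/-- `ω` has strictly positive upper `d`-dimensional density at `x`. -/
def posUpperDensity {d : ℕ} (ω : Set (EuclideanSpace ℝ (Fin d)))
    (x : EuclideanSpace ℝ (Fin d)) : Prop :=
  0 < Filter.limsup (fun ρ : ℝ => volume (ω ∩ Metric.ball x ρ) / volume (Metric.ball x ρ))
    (nhdsWithin 0 (Set.Ioi 0))

/-- The essential boundary of `ω`: points where both `ω` and its complement have
strictly positive upper density. -/
def essBoundary {d : ℕ} (ω : Set (EuclideanSpace ℝ (Fin d))) :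
    Set (EuclideanSpace ℝ (Fin d)) :=
  {x | posUpperDensity ω x ∧ posUpperDensity ωᶜ x}

section Translates

variable {E : Type*} [AddCommGroup E] [Module ℝ E] [MeasurableSpace E] [MeasurableAdd E]
  (μ : Measure E) [μ.IsAddLeftInvariant] [SFinite μ]

/- The translates of `s` by the multiples of `v` are pairwise disjoint and all have measure
`μ s`; there are uncountably many of them. -/
theorem measure_eq_zero_of_forall_add_smul_mem_eq_zero {s : Set E} (hs : MeasurableSet s) (v : E)
    (h : ∀ x ∈ s, ∀ t : ℝ, x + t • v ∈ s → t = 0) : μ s = 0 := by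
  let T : ℝ → Set E := fun t => (fun x => t • v + x) ⁻¹' s
  have hdisj : Pairwise (Function.onFun Disjoint T) := by
    intro t t' htt'
    refine Set.disjoint_left.2 fun x hx hx' => htt' ?_
    have h' : t • v + x + (t' - t) • v ∈ s := by
      rwa [show t • v + x + (t' - t) • v = t' • v + x by module]
    linarith [h _ hx _ h']
  by_contra hμ
  have hcount := Measure.countable_meas_pos_of_disjoint_iUnion (μ := μ)
    (fun t => hs.preimage (measurable_const_add _)) hdisj
  simp only [measure_preimage_add, pos_iff_ne_zero.2 hμ, Set.ofPred_true] at hcount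
  exact not_countable_univ hcount

end Translates

theorem inner_add_smul_of_norm_eq_one {E : Type*} [NormedAddCommGroup E]
    [InnerProductSpace ℝ E] {ν : E} (hν : ‖ν‖ = 1) (x : E) (t : ℝ) :
    ⟪x + t • ν, ν⟫ = ⟪x, ν⟫ + t := by
  rw [inner_add_left, real_inner_smul_left, real_inner_self_eq_norm_mul_norm, hν, mul_one, mul_one]

section Halfspace

variable {E : Type*} [NormedAddCommGroup E] [InnerProductSpace ℝ E] [MeasurableSpace E]
  [BorelSpace E] (μ : Measure E) [μ.IsAddLeftInvariant] [SFinite μ]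

theorem measure_eq_zero_of_rays_subsingleton {ν : E} (hν : ‖ν‖ = 1) {a : ℝ} {C : Set E}
    (hC : MeasurableSet C) (hCa : C ⊆ {x | ⟪x, ν⟫ ≤ a})
    (hray : ∀ z : E, ⟪z, ν⟫ = a →
      (C ∩ {p | ∃ t : ℝ, t < 0 ∧ p = z + t • ν}).Subsingleton) :
    μ C = 0 := by
  have hinner : Measurable fun x : E => ⟪x, ν⟫ := (continuous_id.inner continuous_const).measurable
  have hsplit : C ⊆ (C ∩ {x | ⟪x, ν⟫ < a}) ∪ (C ∩ {x | ⟪x, ν⟫ = a}) := fun x hx => by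
    have hxa : ⟪x, ν⟫ ≤ a := hCa hx
    rcases hxa.lt_or_eq with h | h
    exacts [Or.inl ⟨hx, h⟩, Or.inr ⟨hx, h⟩]
  refine measure_mono_null hsplit (measure_union_null ?_ ?_)
  · refine measure_eq_zero_of_forall_add_smul_mem_eq_zero μ
      (hC.inter (measurableSet_lt hinner measurable_const)) ν ?_
    rintro x ⟨hx, hxa⟩ t ⟨hxt, hxta⟩
    simp only [mem_ofPred_eq, inner_add_smul_of_norm_eq_one hν] at hxa hxta
    -- both points lie on the ray below the foot `x + (a - ⟪x, ν⟫) • ν` of `x` on the hyperplane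
    have heq := hray (x + (a - ⟪x, ν⟫) • ν) (by rw [inner_add_smul_of_norm_eq_one hν]; ring)
      ⟨hx, ⟪x, ν⟫ - a, by linarith, by module⟩ ⟨hxt, ⟪x, ν⟫ - a + t, by linarith, by module⟩
    have hν0 : ν ≠ 0 := norm_ne_zero_iff.1 (by rw [hν]; exact one_ne_zero)
    simpa [hν0] using heq
  · refine measure_eq_zero_of_forall_add_smul_mem_eq_zero μ
      (hC.inter (measurableSet_eq_fun hinner measurable_const)) ν ?_
    rintro x ⟨-, hx⟩ t ⟨-, hxt⟩
    simp only [mem_ofPred_eq, inner_add_smul_of_norm_eq_one hν] at hx hxt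
    linarith

end Halfspace

theorem exists_isOpen_measure_symmDiff_eq_zero {X : Type*} [TopologicalSpace X]
    [SecondCountableTopology X] [MeasurableSpace X] {μ : Measure X} {s N : Set X}
    (hN : μ N = 0) (h : ∀ x ∉ N, ∃ V ∈ 𝓝 x, μ (s ∩ V) = 0 ∨ μ (sᶜ ∩ V) = 0) :
    ∃ U : Set X, IsOpen U ∧ μ (s ∆ U) = 0 := by
  set U := ⋃₀ {V : Set X | IsOpen V ∧ μ (sᶜ ∩ V) = 0}
  have hU_diff : μ (U \ s) = 0 := by
    refine measure_null_of_locally_null _ fun x ⟨⟨V, ⟨hV, hVs⟩, hxV⟩, _⟩ => ?_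
    exact ⟨(U \ s) ∩ V, inter_mem_nhdsWithin _ (hV.mem_nhds hxV),
      measure_mono_null (inter_subset_inter_left V fun _ hy => hy.2) hVs⟩
  have hdiff_U : μ ((s \ U) \ N) = 0 := by
    refine measure_null_of_locally_null _ fun x ⟨⟨hxs, hxU⟩, hxN⟩ => ?_
    obtain ⟨V, hV, hVs | hVs⟩ := h x hxN
    · exact ⟨((s \ U) \ N) ∩ V, inter_mem_nhdsWithin _ hV,
        measure_mono_null (inter_subset_inter_left V fun _ hy => hy.1.1) hVs⟩
    · exact (hxU ⟨interior V, ⟨isOpen_interior,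
        measure_mono_null (inter_subset_inter_right _ interior_subset) hVs⟩,
        mem_interior_iff_mem_nhds.2 hV⟩).elim
  have hs_diff : μ (s \ U) = 0 :=
    measure_mono_null (by rw [sdiff_union_self]; exact subset_union_left)
      (measure_union_null hdiff_U hN)
  refine ⟨U, isOpen_sUnion fun V hV => hV.1, ?_⟩
  rw [symmDiff_def]
  exact measure_union_null hs_diff hU_diff

theorem tendsto_measure_inter_of_tendsto_measure_symmDiff {α ι : Type*} [MeasurableSpace α]
    {μ : Measure α} {l : Filter ι} {s t₀ : Set α} {t : ι → Set α} (ht₀ : μ t₀ ≠ ⊤)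
    (h : Tendsto (fun i => μ (t i ∆ t₀)) l (𝓝 0)) :
    Tendsto (fun i => μ (s ∩ t i)) l (𝓝 (μ (s ∩ t₀))) := by
  have hle : ∀ A B : Set α, μ (s ∩ A) - μ (s ∩ B) ≤ μ (A ∆ B) := fun A B =>
    le_measure_symmDiff.trans
      (measure_mono (by rw [← inter_symmDiff_distrib_left]; exact inter_subset_right))
  refine (ENNReal.tendsto_nhds (ne_top_of_le_ne_top ht₀ (measure_mono inter_subset_right))).2
    fun ε hε => ?_
  filter_upwards [ENNReal.tendsto_nhds_zero.1 h ε hε] with i hi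
  refine ⟨tsub_le_iff_right.2 (tsub_le_iff_left.1 ?_), tsub_le_iff_left.1 ((hle _ _).trans hi)⟩
  exact (hle _ _).trans (symmDiff_comm (t i) t₀ ▸ hi)

theorem measure_inter_add_measure_compl_inter {α : Type*} [MeasurableSpace α] {μ : Measure α}
    {s : Set α} (hs : MeasurableSet s) (t : Set α) : μ (s ∩ t) + μ (sᶜ ∩ t) = μ t := by
  rw [inter_comm s, ← sdiff_eq_compl_inter, measure_inter_add_sdiff _ hs]

section Balanced

variable {X : Type*} [PseudoMetricSpace X] [MeasurableSpace X] (μ : Measure X)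

def IsBalancedBall (s : Set X) (x : X) (r : ℝ) : Prop :=
  0 < r ∧ μ (ball x r) = 2 * μ (s ∩ ball x r)

variable {μ} {s : Set X} {x : X} {r : ℝ}

theorem IsBalancedBall.measure_inter_ball_ne_zero [μ.IsOpenPosMeasure]
    (h : IsBalancedBall μ s x r) : μ (s ∩ ball x r) ≠ 0 := by
  intro h0
  have hball := h.2
  rw [h0, mul_zero] at hball
  exact (measure_ball_pos μ x h.1).ne' hball

theorem IsBalancedBall.compl [ProperSpace X] [IsFiniteMeasureOnCompacts μ]
    (hs : MeasurableSet s) (h : IsBalancedBall μ s x r) : IsBalancedBall μ sᶜ x r := by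
  have hsplit := measure_inter_add_measure_compl_inter (μ := μ) hs (ball x r)
  rw [h.2, two_mul] at hsplit
  have hfin : μ (s ∩ ball x r) ≠ ⊤ :=
    ne_top_of_le_ne_top measure_ball_lt_top.ne (measure_mono inter_subset_right)
  refine ⟨h.1, ?_⟩
  rw [h.2, (ENNReal.add_right_inj hfin).1 hsplit]

end Balanced

section AddHaar

variable {E : Type*} [NormedAddCommGroup E] [NormedSpace ℝ E] [FiniteDimensional ℝ E]
  [MeasurableSpace E] [BorelSpace E] {μ : Measure E} [μ.IsAddHaarMeasure] {s : Set E}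
  {c : E} {R : ℝ}

theorem IsBalancedBall.measure_ball_two_mul_le {x z : E} {r : ℝ}
    (h : IsBalancedBall μ s x r) (hz : dist z x ≤ r) :
    μ (ball z (2 * r)) ≤ 2 ^ (Module.finrank ℝ E + 1) * μ (s ∩ ball z (2 * r)) := by
  have hsub : ball x r ⊆ ball z (2 * r) := ball_subset_ball' (by rw [dist_comm]; linarith)
  calc μ (ball z (2 * r)) = 2 ^ Module.finrank ℝ E * μ (ball x r) := by
        rw [Measure.addHaar_ball_mul_of_pos μ z two_pos, Measure.addHaar_ball_center μ x,
          ENNReal.ofReal_pow zero_le_two, ENNReal.ofReal_ofNat]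
    _ = 2 ^ Module.finrank ℝ E * (2 * μ (s ∩ ball x r)) := by rw [← h.2]
    _ ≤ 2 ^ (Module.finrank ℝ E + 1) * μ (s ∩ ball z (2 * r)) := by
        rw [pow_succ, mul_assoc]
        gcongr

variable (μ) in
theorem closedBall_ae_eq_ball (x : E) {r : ℝ} (hr : r ≠ 0) : closedBall x r =ᵐ[μ] ball x r :=
  ae_eq_set.2 ⟨by rw [closedBall_sdiff_ball]; exact Measure.addHaar_sphere_of_ne_zero μ x hr,
    by rw [sdiff_eq_empty.2 ball_subset_closedBall, measure_empty]⟩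

variable (μ) in
theorem ae_tendsto_measure_inter_ball_div (hs : MeasurableSet s) :
    ∀ᵐ x ∂μ, Tendsto (fun r => μ (s ∩ ball x r) / μ (ball x r)) (𝓝[>] 0)
      (𝓝 (s.indicator 1 x)) := by
  filter_upwards [Besicovitch.ae_tendsto_measure_inter_div_of_measurableSet μ hs] with x hx
  refine hx.congr' ?_
  filter_upwards [self_mem_nhdsWithin] with r (hr : 0 < r)
  rw [measure_congr ((ae_eq_refl s).inter (closedBall_ae_eq_ball μ x hr.ne')),
    measure_congr (closedBall_ae_eq_ball μ x hr.ne')]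

variable (μ) in
theorem continuous_measure_inter_ball (s : Set E) (r : ℝ) :
    Continuous fun x => μ (s ∩ ball x r) := by
  let T : C(E, C(E, E)) := ContinuousMap.curry ⟨fun p : E × E => p.2 - p.1, by fun_prop⟩
  have hT : ∀ y, T y ⁻¹' ball 0 r = ball y r := fun y => by
    ext w; simp [T, dist_eq_norm]
  refine continuous_iff_continuousAt.2 fun x => ?_
  have hsymm := tendsto_measure_symmDiff_preimage_nhds_zero (s := ball (0 : E) r)
    (T.continuous.tendsto x) (.of_forall fun y => measurePreserving_sub_right μ y)
    (measurePreserving_sub_right μ x) measurableSet_ball.nullMeasurableSet measure_ball_lt_top.ne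
  simp only [hT] at hsymm
  exact tendsto_measure_inter_of_tendsto_measure_symmDiff measure_ball_lt_top.ne hsymm

/- Around a density point `p` of `s` and a density point `q` of `sᶜ`, small balls are more than
half inside, resp. outside `s`; moving the center from `q` to `p`, the intermediate value theorem
gives a ball halved by `s`. -/
theorem exists_isBalancedBall_subset_ball (hs : MeasurableSet s) (h₁ : μ (s ∩ ball c R) ≠ 0)
    (h₂ : μ (sᶜ ∩ ball c R) ≠ 0) {ε : ℝ} (hε : 0 < ε) :
    ∃ x r, IsBalancedBall μ s x r ∧ r ≤ ε ∧ closedBall x r ⊆ ball c R := by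
  have hdens := ae_tendsto_measure_inter_ball_div μ hs
  obtain ⟨p, ⟨hps, hpc⟩, hp⟩ :=
    Measure.exists_mem_of_measure_ne_zero_of_ae h₁ (ae_restrict_of_ae hdens)
  obtain ⟨q, ⟨hqs, hqc⟩, hq⟩ :=
    Measure.exists_mem_of_measure_ne_zero_of_ae h₂ (ae_restrict_of_ae hdens)
  rw [indicator_of_mem hps, Pi.one_apply] at hp
  rw [indicator_of_notMem hqs] at hq
  set D := max (dist p c) (dist q c)
  have hD : D < R := max_lt hpc hqc
  obtain ⟨r, ⟨hpr, hqr⟩, hr₀, hr⟩ : ∃ r, (2⁻¹ < μ (s ∩ ball p r) / μ (ball p r) ∧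
      μ (s ∩ ball q r) / μ (ball q r) < 2⁻¹) ∧ 0 < r ∧ r < min ε (R - D) :=
    ((hp.eventually (lt_mem_nhds (by norm_num))).and
      (hq.eventually (gt_mem_nhds (by norm_num)))).and
        (Ioo_mem_nhdsGT (lt_min hε (sub_pos.2 hD))) |>.exists
  set B := μ (ball (0 : E) r)
  have hB : ∀ y, μ (ball y r) = B := fun y => Measure.addHaar_ball_center μ y r
  have hB₀ : ∀ y, μ (ball y r) ≠ 0 := fun y => (measure_ball_pos μ y hr₀).ne'
  have hBtop : ∀ y, μ (ball y r) ≠ ⊤ := fun _ => measure_ball_lt_top.ne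
  have hp' : 2⁻¹ * B ≤ μ (s ∩ ball p r) := by
    rw [← hB p]
    exact ((ENNReal.lt_div_iff_mul_lt (.inl (hB₀ p)) (.inl (hBtop p))).1 hpr).le
  have hq' : μ (s ∩ ball q r) ≤ 2⁻¹ * B := by
    rw [← hB q]
    exact ((ENNReal.div_lt_iff (.inl (hB₀ q)) (.inl (hBtop q))).1 hqr).le
  obtain ⟨x, hxD, hx : μ (s ∩ ball x r) = 2⁻¹ * B⟩ :=
    (convex_closedBall c D).isPreconnected.intermediate_value
      (mem_closedBall.2 (le_max_right _ _)) (mem_closedBall.2 (le_max_left _ _))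
      (continuous_measure_inter_ball μ s r).continuousOn ⟨hq', hp'⟩
  refine ⟨x, r, ⟨hr₀, ?_⟩, (hr.trans_le (min_le_left _ _)).le, closedBall_subset_ball' ?_⟩
  · rw [hx, hB, ← mul_assoc, ENNReal.mul_inv_cancel two_ne_zero ENNReal.ofNat_ne_top, one_mul]
  · have : dist x c ≤ D := hxD
    linarith [min_le_right ε (R - D)]

theorem exists_seq_isBalancedBall (hs : MeasurableSet s) (h₁ : μ (s ∩ ball c R) ≠ 0)
    (h₂ : μ (sᶜ ∩ ball c R) ≠ 0) :
    ∃ (x : ℕ → E) (r : ℕ → ℝ), (∀ n, IsBalancedBall μ s (x n) (r n)) ∧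
      Tendsto r atTop (𝓝 0) ∧
      (∀ n, closedBall (x (n + 1)) (r (n + 1)) ⊆ closedBall (x n) (r n)) ∧
      closedBall (x 0) (r 0) ⊆ ball c R := by
  have step : ∀ b : {b : E × ℝ // IsBalancedBall μ s b.1 b.2},
      ∃ b' : {b : E × ℝ // IsBalancedBall μ s b.1 b.2},
        b'.1.2 ≤ b.1.2 / 2 ∧ closedBall b'.1.1 b'.1.2 ⊆ ball b.1.1 b.1.2 := fun ⟨_, hb⟩ =>
    let ⟨x', r', hb', hr', hsub⟩ := exists_isBalancedBall_subset_ball hs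
      hb.measure_inter_ball_ne_zero (hb.compl hs).measure_inter_ball_ne_zero (half_pos hb.1)
    ⟨⟨(x', r'), hb'⟩, hr', hsub⟩
  choose next hnext using step
  obtain ⟨x₀, r₀, hb₀, -, h₀⟩ := exists_isBalancedBall_subset_ball hs h₁ h₂ one_pos
  let b : ℕ → {b : E × ℝ // IsBalancedBall μ s b.1 b.2} := fun n => next^[n] ⟨(x₀, r₀), hb₀⟩
  have hb : ∀ n, b (n + 1) = next (b n) := fun n => Function.iterate_succ_apply' next n _
  have hr : ∀ n, (b n).1.2 ≤ r₀ / 2 ^ n := by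
    intro n
    induction n with
    | zero => simp [b]
    | succ n ih =>
      rw [hb, pow_succ, ← div_div]
      exact (hnext _).1.trans (by gcongr)
  refine ⟨fun n => (b n).1.1, fun n => (b n).1.2, fun n => (b n).2, ?_, fun n => ?_, h₀⟩
  · exact squeeze_zero (fun n => (b n).2.1.le) hr
      (tendsto_const_nhds.div_atTop (tendsto_pow_atTop_atTop_of_one_lt one_lt_two))
  · dsimp only
    rw [hb]
    exact (hnext _).2.trans ball_subset_closedBall

/- The balls of a nested sequence of balanced balls shrink to a point `z`, at which both `s` and
its complement keep a fixed proportion of infinitely many balls. -/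
theorem exists_mem_ball_frequently_measure_ball_le (hs : MeasurableSet s)
    (h₁ : μ (s ∩ ball c R) ≠ 0) (h₂ : μ (sᶜ ∩ ball c R) ≠ 0) :
    ∃ z ∈ ball c R, ∃ᶠ ρ in 𝓝[>] (0 : ℝ),
      μ (ball z ρ) ≤ 2 ^ (Module.finrank ℝ E + 1) * μ (s ∩ ball z ρ) ∧
      μ (ball z ρ) ≤ 2 ^ (Module.finrank ℝ E + 1) * μ (sᶜ ∩ ball z ρ) := by
  obtain ⟨x, r, hb, hr, hsub, h₀⟩ := exists_seq_isBalancedBall hs h₁ h₂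
  obtain ⟨z, hz⟩ := IsCompact.nonempty_iInter_of_sequence_nonempty_isCompact_isClosed
    (fun n => closedBall (x n) (r n)) hsub (fun n => nonempty_closedBall.2 (hb n).1.le)
    (isCompact_closedBall _ _) (fun _ => isClosed_closedBall)
  rw [mem_iInter] at hz
  have hρ : Tendsto (fun n => 2 * r n) atTop (𝓝[>] 0) :=
    tendsto_nhdsWithin_iff.2 ⟨by simpa using hr.const_mul 2,
      .of_forall fun n => mul_pos two_pos (hb n).1⟩
  exact ⟨z, h₀ (hz 0), hρ.frequently (.of_forall fun n =>
    ⟨(hb n).measure_ball_two_mul_le (hz n), ((hb n).compl hs).measure_ball_two_mul_le (hz n)⟩)⟩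

end AddHaar

theorem posUpperDensity.mem_closure {d : ℕ} {ω : Set (EuclideanSpace ℝ (Fin d))}
    {x : EuclideanSpace ℝ (Fin d)} (hx : posUpperDensity ω x) : x ∈ closure ω := by
  by_contra hx'
  obtain ⟨ε, hε, hεω⟩ := Metric.isOpen_iff.1 isClosed_closure.isOpen_compl x hx'
  have h0 : ∀ᶠ ρ in 𝓝[>] (0 : ℝ), volume (ω ∩ ball x ρ) / volume (ball x ρ) = 0 := by
    filter_upwards [Ioo_mem_nhdsGT hε] with ρ hρ
    have : ω ∩ ball x ρ = ∅ := (Set.disjoint_right.2 fun y hy hyω =>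
      hεω (ball_subset_ball hρ.2.le hy) (subset_closure hyω)).inter_eq
    rw [this, measure_empty, ENNReal.zero_div]
  exact hx.ne' ((limsup_congr h0).trans (limsup_const 0))

theorem essBoundary_subset_closure {d : ℕ} (ω : Set (EuclideanSpace ℝ (Fin d))) :
    essBoundary ω ⊆ closure ω :=
  fun _ hx => hx.1.mem_closure

theorem posUpperDensity_of_frequently_le {d : ℕ} {A : Set (EuclideanSpace ℝ (Fin d))}
    {x : EuclideanSpace ℝ (Fin d)} {κ : ℝ≥0∞} (hκ₀ : κ ≠ 0) (hκ : κ ≠ ⊤)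
    (h : ∃ᶠ ρ in 𝓝[>] (0 : ℝ), volume (ball x ρ) ≤ κ * volume (A ∩ ball x ρ)) :
    posUpperDensity A x := by
  have hfreq : ∃ᶠ ρ in 𝓝[>] (0 : ℝ), κ⁻¹ ≤ volume (A ∩ ball x ρ) / volume (ball x ρ) := by
    refine (h.and_eventually self_mem_nhdsWithin).mono fun ρ ⟨hρ, (hρ₀ : 0 < ρ)⟩ => ?_
    rw [ENNReal.le_div_iff_mul_le (.inl (measure_ball_pos _ x hρ₀).ne')
      (.inl measure_ball_lt_top.ne), ENNReal.inv_mul_le_iff hκ₀ hκ]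
    exact hρ
  exact (ENNReal.inv_pos.2 hκ).trans_le (le_limsup_of_frequently_le hfreq)

theorem measure_inter_ball_eq_zero_or_of_disjoint_essBoundary {d : ℕ}
    {ω : Set (EuclideanSpace ℝ (Fin d))} (hω : MeasurableSet ω) {c : EuclideanSpace ℝ (Fin d)}
    {R : ℝ} (h : Disjoint (ball c R) (essBoundary ω)) :
    volume (ω ∩ ball c R) = 0 ∨ volume (ωᶜ ∩ ball c R) = 0 := by
  by_contra! hne
  obtain ⟨z, hzc, hz⟩ := exists_mem_ball_frequently_measure_ball_le hω hne.1 hne.2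
  have hκ₀ : (2 : ℝ≥0∞) ^ (Module.finrank ℝ (EuclideanSpace ℝ (Fin d)) + 1) ≠ 0 := by simp
  have hκ : (2 : ℝ≥0∞) ^ (Module.finrank ℝ (EuclideanSpace ℝ (Fin d)) + 1) ≠ ⊤ := by simp
  exact Set.disjoint_left.1 h hzc
    ⟨posUpperDensity_of_frequently_le hκ₀ hκ (hz.mono fun _ => And.left),
      posUpperDensity_of_frequently_le hκ₀ hκ (hz.mono fun _ => And.right)⟩

theorem stmt6_general {d : ℕ} (ν : EuclideanSpace ℝ (Fin d)) (hν : ‖ν‖ = 1) (a : ℝ)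
    (ω : Set (EuclideanSpace ℝ (Fin d))) (hmeas : MeasurableSet ω)
    (hsub : ω ⊆ {x | ⟪x, ν⟫ ≤ a})
    (hray : ∀ z : EuclideanSpace ℝ (Fin d), ⟪z, ν⟫ = a →
      (closure (essBoundary ω) ∩ {p | ∃ t : ℝ, t < 0 ∧ p = z + t • ν}).Subsingleton) :
    ∃ U : Set (EuclideanSpace ℝ (Fin d)), IsOpen U ∧ volume (ω ∆ U) = 0 := by
  have hhalfspace : IsClosed {x : EuclideanSpace ℝ (Fin d) | ⟪x, ν⟫ ≤ a} :=
    isClosed_le (by fun_prop) continuous_const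
  have hN : volume (closure (essBoundary ω)) = 0 :=
    measure_eq_zero_of_rays_subsingleton volume hν isClosed_closure.measurableSet
      (closure_minimal ((essBoundary_subset_closure ω).trans (closure_minimal hsub hhalfspace))
        hhalfspace)
      hray
  refine exists_isOpen_measure_symmDiff_eq_zero hN fun x hx => ?_
  obtain ⟨R, hR, hRN⟩ := Metric.isOpen_iff.1 isClosed_closure.isOpen_compl x hx
  exact ⟨ball x R, ball_mem_nhds x hR, measure_inter_ball_eq_zero_or_of_disjoint_essBoundary hmeas
    ((subset_compl_iff_disjoint_right.1 hRN).mono_right subset_closure)⟩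

/-- If `ω` is a bounded measurable subset of the lower halfspace `{⟪x, ν⟫ ≤ a}` such that
the closure of its essential boundary meets each open downward ray in at most one point,
then `ω` is essentially open: it coincides with an open set up to a Lebesgue null set. -/
theorem stmt6 {d : ℕ} (ν : EuclideanSpace ℝ (Fin d)) (hν : ‖ν‖ = 1) (a : ℝ)
    (ω : Set (EuclideanSpace ℝ (Fin d))) (hmeas : MeasurableSet ω)
    (hbdd : Bornology.IsBounded ω)
    (hsub : ω ⊆ {x | ⟪x, ν⟫ ≤ a})
    (hray : ∀ z : EuclideanSpace ℝ (Fin d), ⟪z, ν⟫ = a →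
      (closure (essBoundary ω) ∩ {p | ∃ t : ℝ, t < 0 ∧ p = z + t • ν}).Subsingleton) :
    ∃ U : Set (EuclideanSpace ℝ (Fin d)), IsOpen U ∧ volume (ω ∆ U) = 0 :=
  stmt6_general ν hν a ω hmeas hsub hray
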